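/- Let γ : ℤ → ℝ be even with ∑_{k∈ℤ} |γ(k)| < ∞ and ∑_{k∈ℤ} |k γ(k)| < ∞, and define f_u(λ) = (2π)^{-1} ∑_{h∈ℤ} γ(h) e^{ihλ}. Then there exists a constant C, depending only on γ, such that for every n ≥ 2 and all integers 1 ≤ j, k ≤ n−1: | ∑_{t=1}^{n} ∑_{s=1}^{n} γ(t−s) e^{i(t λ_j − s λ_k)} − 𝟙(j = k) · 2π n f_u(λ_j) | ≤ C, where λ_j = 2πj/n. -/

import Mathlib

open Finset

/-! With `a = e^{iλ_j}` and `c = e^{i(λ_j - λ_k)}` the double sum is the Toeplitz form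
`∑_{t,s} b(t - s) c^s` with `b(h) = γ(h) a^h`, while the subtracted term is `(∑_h b(h)) ∑_s c^s`,
because `∑_{s=1}^n c^s = n 𝟙(j = k)` (orthogonality of the `n`-th roots of unity).
For fixed `s` the inner sum over `t` differs from `∑_h b(h)` only by the lags `h` with
`s + h ∉ [1, n]`, and a given lag `h` is missed for at most `|h|` values of `s`.
Hence the difference is at most `∑_h |h| |γ(h)|`, uniformly in `n`, `j`, `k`. -/

/-- Spectral density `f_u(λ) = (2π)⁻¹ ∑_{h∈ℤ} γ(h) e^{ihλ}`. -/
noncomputable def specDens (γ : ℤ → ℝ) (lam : ℝ) : ℂ :=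
  ((2 * Real.pi : ℝ) : ℂ)⁻¹ * ∑' h : ℤ, ((γ h : ℝ) : ℂ) * Complex.exp (Complex.I * (h : ℂ) * (lam : ℂ))

theorem card_filter_add_notMem_Icc_le (n : ℕ) (h : ℤ) :
    #{s ∈ Icc 1 n | ((s : ℕ) : ℤ) + h ∉ Icc (1 : ℤ) n} ≤ h.natAbs := by
  calc #{s ∈ Icc 1 n | ((s : ℕ) : ℤ) + h ∉ Icc (1 : ℤ) n}
      ≤ #(Icc 1 (-h).toNat ∪ Icc (n + 1 - h.toNat) n) := by
        refine card_le_card fun s hs => ?_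
        simp only [mem_filter, mem_Icc, mem_union] at hs ⊢
        omega
    _ ≤ #(Icc 1 (-h).toNat) + #(Icc (n + 1 - h.toNat) n) := card_union_le _ _
    _ ≤ h.natAbs := by simp only [Nat.card_Icc]; omega

theorem sum_Icc_sub_eq_tsum_ite {M : Type*} [AddCommMonoid M] [TopologicalSpace M]
    (b : ℤ → M) (n s : ℕ) :
    ∑ t ∈ Icc 1 n, b (t - s) = ∑' h, if (s : ℤ) + h ∈ Icc (1 : ℤ) n then b h else 0 := by
  rw [tsum_eq_sum (s := (Icc 1 n).image fun t : ℕ => (t : ℤ) - s)]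
  · rw [sum_image fun t _ t' _ htt' => by simpa using htt']
    refine sum_congr rfl fun t ht => ?_
    rw [if_pos (by simp only [mem_Icc] at ht ⊢; omega)]
  · intro h hh
    rw [if_neg]
    contrapose! hh
    simp only [mem_Icc, mem_image] at hh ⊢
    exact ⟨(s + h).toNat, by omega, by omega⟩

section ToeplitzSum

variable {R : Type*} [NormedRing R] [CompleteSpace R]

theorem norm_sum_Icc_sub_sub_tsum_le {b : ℤ → R} (hb : Summable fun h => ‖b h‖) (n s : ℕ) :
    ‖∑ t ∈ Icc 1 n, b (t - s) - ∑' h, b h‖ ≤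
      ∑' h, if (s : ℤ) + h ∉ Icc (1 : ℤ) n then ‖b h‖ else 0 := by
  have hnorm : ∀ h, ‖(if (s : ℤ) + h ∈ Icc (1 : ℤ) n then b h else 0) - b h‖ =
      if (s : ℤ) + h ∉ Icc (1 : ℤ) n then ‖b h‖ else 0 := by
    intro h
    split_ifs <;> simp_all
  have hwindow : Summable fun h => if (s : ℤ) + h ∈ Icc (1 : ℤ) n then b h else 0 :=
    Summable.of_norm <| hb.of_nonneg_of_le (fun _ => norm_nonneg _) fun h => by
      split_ifs <;> simp
  rw [sum_Icc_sub_eq_tsum_ite, ← hwindow.tsum_sub hb.of_norm]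
  refine (norm_tsum_le_tsum_norm ?_).trans_eq (tsum_congr hnorm)
  simp only [hnorm]
  exact hb.of_nonneg_of_le (fun _ => by positivity) fun h => by split_ifs <;> simp

theorem norm_sum_Icc_sum_Icc_sub_tsum_mul_le {b : ℤ → R} (hb : Summable fun h => ‖b h‖)
    (hb' : Summable fun h : ℤ => |(h : ℝ)| * ‖b h‖) {w : ℕ → R} (hw : ∀ s, ‖w s‖ ≤ 1) (n : ℕ) :
    ‖∑ t ∈ Icc 1 n, ∑ s ∈ Icc 1 n, b (t - s) * w s - (∑' h, b h) * ∑ s ∈ Icc 1 n, w s‖ ≤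
      ∑' h : ℤ, |(h : ℝ)| * ‖b h‖ := by
  have hrearrange : ∑ t ∈ Icc 1 n, ∑ s ∈ Icc 1 n, b (t - s) * w s - (∑' h, b h) *
      ∑ s ∈ Icc 1 n, w s = ∑ s ∈ Icc 1 n, (∑ t ∈ Icc 1 n, b (t - s) - ∑' h, b h) * w s := by
    simp only [sub_mul, sum_sub_distrib, sum_mul, mul_sum]
    rw [sum_comm]
  have hmissing : ∀ s : ℕ, Summable fun h => if (s : ℤ) + h ∉ Icc (1 : ℤ) n then ‖b h‖ else 0 :=
    fun s => hb.of_nonneg_of_le (fun _ => by positivity) fun h => by split_ifs <;> simp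
  have hcount : ∀ h : ℤ, #{s ∈ Icc 1 n | ((s : ℕ) : ℤ) + h ∉ Icc (1 : ℤ) n} * ‖b h‖ ≤
      |(h : ℝ)| * ‖b h‖ := fun h => by
    gcongr
    rw [← Int.cast_abs, ← Nat.cast_natAbs]
    exact_mod_cast card_filter_add_notMem_Icc_le n h
  calc _ = ‖∑ s ∈ Icc 1 n, (∑ t ∈ Icc 1 n, b (t - s) - ∑' h, b h) * w s‖ := by rw [hrearrange]
    _ ≤ ∑ s ∈ Icc 1 n, ‖∑ t ∈ Icc 1 n, b (t - s) - ∑' h, b h‖ :=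
        norm_sum_le_of_le _ fun s _ =>
          (norm_mul_le _ _).trans (mul_le_of_le_one_right (norm_nonneg _) (hw s))
    _ ≤ ∑ s ∈ Icc 1 n, ∑' h, if (s : ℤ) + h ∉ Icc (1 : ℤ) n then ‖b h‖ else 0 :=
        sum_le_sum fun s _ => norm_sum_Icc_sub_sub_tsum_le hb n s
    _ = ∑' h, ∑ s ∈ Icc 1 n, if (s : ℤ) + h ∉ Icc (1 : ℤ) n then ‖b h‖ else 0 :=
        (Summable.tsum_finsetSum fun s _ => hmissing s).symm
    _ = ∑' h : ℤ, #{s ∈ Icc 1 n | ((s : ℕ) : ℤ) + h ∉ Icc (1 : ℤ) n} * ‖b h‖ := by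
        simp only [← sum_filter, sum_const, nsmul_eq_mul]
    _ ≤ ∑' h : ℤ, |(h : ℝ)| * ‖b h‖ :=
        Summable.tsum_le_tsum hcount (hb'.of_nonneg_of_le (fun _ => by positivity) hcount) hb'

end ToeplitzSum

section Fourier

open Complex
open scoped Real

theorem sum_Icc_pow_eq_zero {K : Type*} [DivisionRing K] {c : K} {n : ℕ} (hcn : c ^ n = 1) (hc : c ≠ 1) :
    ∑ s ∈ Icc 1 n, c ^ s = 0 := by
  rw [← Ico_add_one_right_eq_Icc, sum_Ico_eq_sum_range, Nat.add_sub_cancel]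
  simp only [pow_add, pow_one, ← mul_sum, geom_sum_eq hc, hcn, sub_self, zero_div, mul_zero]

theorem exp_I_mul_sub_eq (x y : ℝ) (t s : ℕ) :
    exp (I * (t * x - s * y)) = exp (x * I) ^ ((t : ℤ) - s) * exp ((x - y : ℝ) * I) ^ s := by
  rw [← exp_int_mul, ← exp_nat_mul, ← exp_add]
  congr 1
  push_cast
  ring

theorem sum_Icc_exp_two_pi_div_sub_mul_I_pow {n j k : ℕ} (hj : j < n) (hk : k < n) :
    ∑ s ∈ Icc 1 n, exp ((2 * π * j / n - 2 * π * k / n : ℝ) * I) ^ s =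
      if j = k then (n : ℂ) else 0 := by
  split_ifs with hjk
  · simp [hjk]
  have hζ := isPrimitiveRoot_exp n (by omega)
  have hc : exp ((2 * π * j / n - 2 * π * k / n : ℝ) * I) = exp (2 * π * I / n) ^ ((j : ℤ) - k) := by
    rw [← exp_int_mul]
    congr 1
    push_cast
    ring
  rw [hc]
  refine sum_Icc_pow_eq_zero ?_ ?_
  · rw [← zpow_natCast, ← zpow_mul, mul_comm ((j : ℤ) - k), zpow_mul, hζ.zpow_eq_one, one_zpow]
  · intro h1
    have hdvd := (hζ.zpow_eq_one_iff_dvd _).mp h1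
    have := Int.eq_zero_of_abs_lt_dvd hdvd (by rw [abs_lt]; omega)
    omega

theorem two_pi_mul_specDens (γ : ℤ → ℝ) (x : ℝ) :
    2 * π * specDens γ x = ∑' h : ℤ, (γ h : ℂ) * exp (x * I) ^ h := by
  rw [specDens, ← mul_assoc, ← ofReal_ofNat, ← ofReal_mul,
    mul_inv_cancel₀ (ofReal_ne_zero.mpr (by positivity)), one_mul]
  refine tsum_congr fun h => ?_
  rw [← exp_int_mul]
  ring_nf

end Fourier

theorem stmt_7_general (γ : ℤ → ℝ)
    (h1 : Summable fun k : ℤ => |γ k|)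
    (h2 : Summable fun k : ℤ => |(k : ℝ) * γ k|) :
    ∃ C : ℝ, ∀ n : ℕ, 2 ≤ n → ∀ j k : ℕ,
      1 ≤ j → j ≤ n - 1 → 1 ≤ k → k ≤ n - 1 →
      ‖(∑ t ∈ Finset.Icc 1 n, ∑ s ∈ Finset.Icc 1 n,
        ((γ ((t : ℤ) - (s : ℤ)) : ℝ) : ℂ) *
          Complex.exp (Complex.I *
            ((t : ℂ) * (2 * (Real.pi : ℂ) * j / n) - (s : ℂ) * (2 * (Real.pi : ℂ) * k / n))))
        - (if j = k then 2 * (Real.pi : ℂ) * n * specDens γ (2 * Real.pi * j / n) else 0)‖ ≤ C := by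
  refine ⟨∑' h : ℤ, |(h : ℝ)| * |γ h|, fun n _ j k hj1 hjn hk1 hkn => ?_⟩
  set x := 2 * Real.pi * j / n
  set y := 2 * Real.pi * k / n
  set a := Complex.exp (x * Complex.I)
  set c := Complex.exp ((x - y : ℝ) * Complex.I)
  have hnorm : ∀ h : ℤ, ‖(γ h : ℂ) * a ^ h‖ = |γ h| := fun h => by
    rw [norm_mul, norm_zpow, Complex.norm_exp_ofReal_mul_I, one_zpow, mul_one, Complex.norm_real,
      Real.norm_eq_abs]
  have hsummand : ∀ t s : ℕ, (γ ((t : ℤ) - s) : ℂ) * Complex.exp (Complex.I *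
      ((t : ℂ) * (2 * (Real.pi : ℂ) * j / n) - (s : ℂ) * (2 * (Real.pi : ℂ) * k / n))) =
      (γ ((t : ℤ) - s) : ℂ) * a ^ ((t : ℤ) - s) * c ^ s := fun t s => by
    rw [mul_assoc (γ ((t : ℤ) - s) : ℂ)]
    congr 1
    calc _ = Complex.exp (Complex.I * ((t : ℂ) * x - (s : ℂ) * y)) := by
          simp only [x, y]
          push_cast
          ring_nf
      _ = a ^ ((t : ℤ) - s) * c ^ s := exp_I_mul_sub_eq x y t s
  have hdiag : (if j = k then 2 * (Real.pi : ℂ) * n * specDens γ x else 0) =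
      (∑' h : ℤ, (γ h : ℂ) * a ^ h) * ∑ s ∈ Icc 1 n, c ^ s := by
    rw [sum_Icc_exp_two_pi_div_sub_mul_I_pow (by omega) (by omega), ← two_pi_mul_specDens]
    split_ifs <;> ring
  simp only [hsummand, hdiag]
  simpa only [hnorm] using
    norm_sum_Icc_sum_Icc_sub_tsum_mul_le (b := fun h : ℤ => (γ h : ℂ) * a ^ h)
      (by simpa only [hnorm] using h1) (by simpa only [hnorm, abs_mul] using h2)
      (w := (c ^ ·)) (fun s => by rw [norm_pow, Complex.norm_exp_ofReal_mul_I, one_pow]) n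

/-- step in Lemma 7 of the paper.  For an even, absolutely summable `γ`
with `∑|kγ(k)| < ∞` and `f_u(λ) = (2π)⁻¹ ∑ γ(h) e^{ihλ}`, the quantities
`∑_{t,s=1}^n γ(t-s) e^{i(tλ_j - sλ_k)} - 𝟙(j=k)·2πn·f_u(λ_j)` are uniformly bounded
over `n ≥ 2` and `1 ≤ j, k ≤ n-1`, where `λ_j = 2πj/n`. -/
theorem stmt_7 (γ : ℤ → ℝ) (heven : ∀ k, γ (-k) = γ k)
    (h1 : Summable fun k : ℤ => |γ k|)
    (h2 : Summable fun k : ℤ => |(k : ℝ) * γ k|) :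
    ∃ C : ℝ, ∀ n : ℕ, 2 ≤ n → ∀ j k : ℕ,
      1 ≤ j → j ≤ n - 1 → 1 ≤ k → k ≤ n - 1 →
      ‖(∑ t ∈ Finset.Icc 1 n, ∑ s ∈ Finset.Icc 1 n,
        ((γ ((t : ℤ) - (s : ℤ)) : ℝ) : ℂ) *
          Complex.exp (Complex.I *
            ((t : ℂ) * (2 * (Real.pi : ℂ) * j / n) - (s : ℂ) * (2 * (Real.pi : ℂ) * k / n))))
        - (if j = k then 2 * (Real.pi : ℂ) * n * specDens γ (2 * Real.pi * j / n) else 0)‖ ≤ C :=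
  stmt_7_general γ h1 h2
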